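/- arXiv:2407.04409 — 4 statements merged into one kernel-verified Lean document; each statement's English description precedes it below -/
import Mathlib

section
/- For every natural number n, the Fibonacci-Fubini number satisfies the explicit formula 𝓕_n = (1/√5) · Σ_{k=0}^{n} Σ_{j=0}^{k} (-1)^{k-j} · C(k,j) · ((α^{k+1} - β^{k+1})/k!) · j^n, where α = (1+√5)/2 and β = (1-√5)/2. -/
/-!
Binet's formula gives `(α^(k+1) - β^(k+1)) / √5 = F_(k+1)`, so the identity reduces, term by term, to the
classical inversion `k! S(n,k) = ∑_j (-1)^(k-j) C(k,j) j^n`. The right side of the inversion is the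
`k`-th forward difference of `x ↦ x^n` at `0`. Expanding `x^n = ∑_i S(n,i) x(x-1)⋯(x-i+1)
= ∑_i i! S(n,i) C(x,i)` and using that `Δ^k C(x,i)` vanishes at `0` unless `i = k` gives the left side.
-/

/-- Stirling numbers of the second kind. -/
def stirling2 : ℕ → ℕ → ℕ
  | 0, 0 => 1
  | 0, _ + 1 => 0
  | _ + 1, 0 => 0
  | n + 1, k + 1 => stirling2 n k + (k + 1) * stirling2 n (k + 1)

open Finset Nat

theorem stirling2_eq_stirlingSecond : ∀ n k, stirling2 n k = stirlingSecond n k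
  | 0, 0 | 0, _ + 1 | _ + 1, 0 => rfl
  | n + 1, k + 1 => by
    rw [stirling2, stirlingSecond_succ_succ, stirling2_eq_stirlingSecond n k,
      stirling2_eq_stirlingSecond n (k + 1), add_comm]

namespace Nat

theorem mul_descFactorial (x k : ℕ) :
    x * x.descFactorial k = x.descFactorial (k + 1) + k * x.descFactorial k := by
  rcases lt_or_ge x k with hxk | hkx
  · simp [descFactorial_eq_zero_iff_lt.mpr hxk]
  · rw [descFactorial_succ, ← add_mul, Nat.sub_add_cancel hkx]

theorem sum_stirlingSecond_mul_descFactorial (n x : ℕ) :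
    ∑ k ∈ range (n + 1), stirlingSecond n k * x.descFactorial k = x ^ n := by
  induction n with
  | zero => simp
  | succ n ih =>
    have shift : ∑ k ∈ range (n + 1), (k + 1) * stirlingSecond n (k + 1) * x.descFactorial (k + 1) =
        ∑ k ∈ range (n + 1), k * stirlingSecond n k * x.descFactorial k := by
      have := sum_range_succ' (fun k : ℕ => k * stirlingSecond n k * x.descFactorial k) (n + 1)
      rw [sum_range_succ, stirlingSecond_eq_zero_of_lt (lt_succ_self n)] at this
      simpa using this.symm
    calc ∑ k ∈ range (n + 2), stirlingSecond (n + 1) k * x.descFactorial k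
        = ∑ k ∈ range (n + 1), ((k + 1) * stirlingSecond n (k + 1) * x.descFactorial (k + 1) +
            stirlingSecond n k * x.descFactorial (k + 1)) := by
          rw [sum_range_succ']
          simp only [stirlingSecond_succ_succ, stirlingSecond_succ_zero, add_mul, zero_mul, add_zero]
      _ = ∑ k ∈ range (n + 1), (k * stirlingSecond n k * x.descFactorial k +
            stirlingSecond n k * x.descFactorial (k + 1)) := by
          rw [sum_add_distrib, sum_add_distrib, shift]
      _ = x * ∑ k ∈ range (n + 1), stirlingSecond n k * x.descFactorial k := by
          rw [mul_sum]
          refine sum_congr rfl fun k _ => ?_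
          rw [mul_left_comm, mul_descFactorial]
          ring
      _ = x ^ (n + 1) := by rw [ih, pow_succ']

theorem factorial_mul_stirlingSecond_eq_sum (n k : ℕ) :
    (k ! * stirlingSecond n k : ℤ) =
      ∑ j ∈ range (k + 1), (-1) ^ (k - j) * k.choose j * (j : ℤ) ^ n := by
  have hpow : (fun x : ℕ => (x : ℤ) ^ n) =
      ∑ i ∈ range (n + 1), (stirlingSecond n i * i ! : ℤ) • fun x : ℕ => (x.choose i : ℤ) := by
    ext x
    simp only [Finset.sum_apply, Pi.smul_apply, smul_eq_mul]
    rw [← Nat.cast_pow, ← sum_stirlingSecond_mul_descFactorial n x]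
    push_cast [descFactorial_eq_factorial_mul_choose, mul_assoc]
    rfl
  have hdiff := fwdDiff_iter_eq_sum_shift 1 (fun x : ℕ => (x : ℤ) ^ n) k 0
  simp only [zero_add, smul_eq_mul, mul_one] at hdiff
  rw [← hdiff, hpow, fwdDiff_iter_finsetSum]
  simp only [fwdDiff_iter_const_smul, Finset.sum_apply, Pi.smul_apply, fwdDiff_iter_choose_zero,
    smul_eq_mul, mul_ite, mul_one, mul_zero]
  rw [sum_ite_eq, mul_comm]
  split_ifs with hk
  · rfl
  · rw [stirlingSecond_eq_zero_of_lt (by simpa using hk), cast_zero, zero_mul]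

end Nat

open Finset Real in
/-- Explicit formula for the Fibonacci-Fubini numbers. -/
theorem fibonacciFubini_explicit (n : ℕ) :
    (∑ k ∈ range (n + 1), (Nat.fib (k + 1) * stirling2 n k : ℝ)) =
      (1 / Real.sqrt 5) *
        ∑ k ∈ range (n + 1), ∑ j ∈ range (k + 1),
          (-1 : ℝ) ^ (k - j) * (k.choose j) *
            ((((1 + Real.sqrt 5) / 2) ^ (k + 1) - ((1 - Real.sqrt 5) / 2) ^ (k + 1)) /
              (k.factorial : ℝ)) * (j : ℝ) ^ n := by
  rw [mul_sum]
  refine sum_congr rfl fun k _ => ?_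
  have binet : ((1 + √5) / 2) ^ (k + 1) - ((1 - √5) / 2) ^ (k + 1) = √5 * Nat.fib (k + 1) := by
    rw [coe_fib_eq]
    field_simp
  have inversion : (k ! * stirling2 n k : ℝ) =
      ∑ j ∈ range (k + 1), (-1) ^ (k - j) * k.choose j * (j : ℝ) ^ n := by
    rw [stirling2_eq_stirlingSecond]
    exact_mod_cast factorial_mul_stirlingSecond_eq_sum n k
  calc (fib (k + 1) * stirling2 n k : ℝ)
      = 1 / √5 * ((√5 * fib (k + 1) / k !) * (k ! * stirling2 n k)) := by field_simp
    _ = _ := by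
      rw [inversion, mul_sum, binet]
      congr 1
      exact sum_congr rfl fun j _ => by ring
end

section
/- For every real number t, the exponential generating function of the Fibonacci-Fubini numbers satisfies Σ_{n=0}^{∞} 𝓕_n · t^n/n! = (1/√5) · (α · e^{(e^t − 1)α} − β · e^{(e^t − 1)β}), where α = (1+√5)/2 and β = (1−√5)/2; in particular the series on the left converges to this value. -/
/-- Fibonacci-Fubini numbers. -/
def fibonacciFubini (n : ℕ) : ℕ :=
  ∑ k ∈ Finset.range (n + 1), Nat.fib (k + 1) * stirling2 n k

/-!
The explicit formula `(-1)^k k! S(n,k) = ∑_{j ≤ k} (-1)^j C(k,j) j^n` turns the row generating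
function `∑_n S(n,k) tⁿ/n!` into `∑_j (-1)^j C(k,j) e^{jt} / ((-1)^k k!) = (e^t - 1)^k / k!`.
Hence for any coefficients `c`, the exponential generating function of `∑_k c_k S(n,k)` is
`∑_k c_k (e^t - 1)^k / k!`, the interchange of summation being justified by absolute convergence
(all terms are dominated by the same expansion at `|t|`). With `c_k = F_{k+1}`, Binet's formula
gives `∑_k F_{k+1} y^k / k! = (α e^{αy} - β e^{βy}) / √5`, evaluated at `y = e^t - 1`.
-/

open Finset Real

open scoped Nat

theorem stirling2_eq_stirlingSecond_s2 : stirling2 = Nat.stirlingSecond := by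
  funext n k
  induction n generalizing k with
  | zero => cases k <;> rfl
  | succ n ih =>
    cases k with
    | zero => rfl
    | succ k => rw [stirling2, Nat.stirlingSecond_succ_succ, ih, ih, Nat.add_comm]

section AlternatingSum

variable {R : Type*} [CommRing R]

theorem alternating_sum_choose_succ_eq_sum_sub (g : ℕ → R) (k : ℕ) :
    ∑ j ∈ range (k + 2), (-1) ^ j * ((k + 1).choose j : R) * g j =
      ∑ j ∈ range (k + 1), (-1) ^ j * (k.choose j : R) * (g j - g (j + 1)) := by
  have h := sum_choose_succ_mul (fun i _ => (-1 : R) ^ i * g i) k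
  convert h using 1
  · exact sum_congr rfl fun j _ => by ring
  · rw [← sum_add_distrib]
    exact sum_congr rfl fun j _ => by ring

theorem alternating_sum_choose_succ_mul_eq_sum_succ (g : ℕ → R) (k : ℕ) :
    ∑ j ∈ range (k + 2), (-1) ^ j * ((k + 1).choose j : R) * (j * g j) =
      -(k + 1) * ∑ i ∈ range (k + 1), (-1) ^ i * (k.choose i : R) * g (i + 1) := by
  rw [sum_range_succ', mul_sum]
  simp only [Nat.cast_zero, zero_mul, mul_zero, add_zero]
  refine sum_congr rfl fun i _ => ?_
  have h := congrArg (Nat.cast : ℕ → R) (Nat.add_one_mul_choose_eq k i)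
  push_cast at h ⊢
  linear_combination (-1 : R) ^ i * g (i + 1) * h

theorem alternating_sum_choose_mul_pow_eq_stirlingSecond (n k : ℕ) :
    ∑ j ∈ range (k + 1), (-1 : R) ^ j * k.choose j * (j : R) ^ n =
      (-1) ^ k * k ! * Nat.stirlingSecond n k := by
  induction n generalizing k with
  | zero =>
    cases k with
    | zero => simp
    | succ k => simpa using alternating_sum_choose_succ_eq_sum_sub (fun _ => (1 : R)) k
  | succ n ih =>
    cases k with
    | zero => simp
    | succ k =>
      have hshift := alternating_sum_choose_succ_mul_eq_sum_succ (fun j => (j : R) ^ n) k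
      have hdiff : ∑ i ∈ range (k + 1), (-1) ^ i * (k.choose i : R) * ((i + 1 : ℕ) : R) ^ n =
          ∑ j ∈ range (k + 1), (-1 : R) ^ j * k.choose j * (j : R) ^ n -
            ∑ j ∈ range (k + 2), (-1 : R) ^ j * (k + 1).choose j * (j : R) ^ n := by
        rw [alternating_sum_choose_succ_eq_sum_sub, ← sum_sub_distrib]
        exact sum_congr rfl fun i _ => by ring
      calc ∑ j ∈ range (k + 2), (-1 : R) ^ j * (k + 1).choose j * (j : R) ^ (n + 1)
          = ∑ j ∈ range (k + 2), (-1 : R) ^ j * (k + 1).choose j * (j * (j : R) ^ n) := by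
            simp only [pow_succ']
        _ = (-1) ^ (k + 1) * (k + 1)! * Nat.stirlingSecond (n + 1) (k + 1) := by
            rw [hshift, hdiff, ih, ih]
            push_cast [Nat.stirlingSecond_succ_succ, Nat.factorial_succ]
            ring

end AlternatingSum

theorem Real.hasSum_pow_div_factorial (x : ℝ) : HasSum (fun n => x ^ n / n !) (exp x) := by
  rw [exp_eq_exp_ℝ]
  exact NormedSpace.expSeries_div_hasSum_exp x

theorem alternating_sum_choose_mul_exp (k : ℕ) (x : ℝ) :
    ∑ j ∈ range (k + 1), (-1) ^ j * (k.choose j : ℝ) * exp (j * x) = (1 - exp x) ^ k := by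
  rw [sub_eq_neg_add, add_pow]
  refine sum_congr rfl fun j _ => ?_
  rw [exp_nat_mul, neg_pow, one_pow]
  ring

theorem hasSum_stirlingSecond_mul_pow_div_factorial (k : ℕ) (x : ℝ) :
    HasSum (fun n => (Nat.stirlingSecond n k : ℝ) * x ^ n / n !) ((exp x - 1) ^ k / k !) := by
  have hsum := hasSum_sum (s := range (k + 1)) fun j _ =>
    (hasSum_pow_div_factorial (j * x)).mul_left ((-1) ^ j * (k.choose j : ℝ))
  have hterm (n : ℕ) :
      ∑ j ∈ range (k + 1), (-1) ^ j * (k.choose j : ℝ) * ((j * x) ^ n / n !) =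
        (-1) ^ k * k ! * (Nat.stirlingSecond n k * x ^ n / n !) := by
    calc _ = (∑ j ∈ range (k + 1), (-1) ^ j * (k.choose j : ℝ) * (j : ℝ) ^ n) *
          (x ^ n / n !) := by
          rw [sum_mul]
          exact sum_congr rfl fun j _ => by ring
      _ = _ := by
          rw [alternating_sum_choose_mul_pow_eq_stirlingSecond]
          ring
  have hvalue : (1 - exp x) ^ k = (-1) ^ k * k ! * ((exp x - 1) ^ k / k !) := by
    rw [← neg_sub, neg_pow]
    field_simp
  simp only [hterm, alternating_sum_choose_mul_exp, hvalue] at hsum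
  exact (hasSum_mul_left_iff (by positivity)).mp hsum

theorem hasSum_fib_succ_mul_pow_div_factorial (y : ℝ) :
    HasSum (fun k => (Nat.fib (k + 1) : ℝ) * y ^ k / k !)
      ((goldenRatio * exp (y * goldenRatio) - goldenConj * exp (y * goldenConj)) / √5) := by
  have h := (((hasSum_pow_div_factorial (y * goldenRatio)).mul_left goldenRatio).sub
    ((hasSum_pow_div_factorial (y * goldenConj)).mul_left goldenConj)).div_const √5
  refine h.congr_fun fun k => ?_
  rw [coe_fib_eq, mul_pow, mul_pow]
  ring

theorem hasSum_sum_mul_stirlingSecond_mul_pow_div_factorial (c : ℕ → ℝ) {t A : ℝ}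
    (hc : Summable fun k => |c k| * (exp |t| - 1) ^ k / k !)
    (hA : HasSum (fun k => c k * (exp t - 1) ^ k / k !) A) :
    HasSum (fun n => (∑ k ∈ range (n + 1), c k * Nat.stirlingSecond n k) * t ^ n / n !) A := by
  set f : ℕ × ℕ → ℝ := fun p => c p.1 * (Nat.stirlingSecond p.2 p.1 * t ^ p.2 / p.2 !)
  have hrow (k : ℕ) (x a : ℝ) :
      HasSum (fun n => a * (Nat.stirlingSecond n k * x ^ n / n !)) (a * ((exp x - 1) ^ k / k !)) :=
    (hasSum_stirlingSecond_mul_pow_div_factorial k x).mul_left a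
  have hf : Summable f := by
    refine Summable.of_norm ?_
    have hnorm : (fun p => ‖f p‖) =
        fun p : ℕ × ℕ => |c p.1| * (Nat.stirlingSecond p.2 p.1 * |t| ^ p.2 / p.2 !) := by
      ext p
      simp [f]
    rw [hnorm, summable_prod_of_nonneg fun p => by positivity]
    refine ⟨fun k => (hrow k |t| |c k|).summable, hc.congr fun k => ?_⟩
    rw [(hrow k |t| |c k|).tsum_eq, mul_div_assoc]
  have hcol (n : ℕ) : HasSum (fun k => f (k, n))
      ((∑ k ∈ range (n + 1), c k * Nat.stirlingSecond n k) * t ^ n / n !) := by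
    rw [sum_mul, sum_div]
    refine (hasSum_sum_of_ne_finset_zero fun k hk => ?_).congr_fun fun k => by simp only [f]; ring
    rw [Nat.stirlingSecond_eq_zero_of_lt (by simpa using hk), Nat.cast_zero, mul_zero, zero_mul,
      zero_div]
  have hrows := hf.hasSum.prod_fiberwise fun k => hrow k t (c k)
  simp only [← mul_div_assoc] at hrows
  rw [hA.unique hrows]
  exact ((Equiv.prodComm ℕ ℕ).hasSum_iff.mpr hf.hasSum).prod_fiberwise hcol

open Real in
/-- Exponential generating function of the Fibonacci-Fubini numbers. -/
theorem fibonacciFubini_egf (t : ℝ) :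
    HasSum (fun n : ℕ => (fibonacciFubini n : ℝ) * t ^ n / (n.factorial : ℝ))
      ((1 / Real.sqrt 5) *
        (((1 + Real.sqrt 5) / 2) * Real.exp ((Real.exp t - 1) * ((1 + Real.sqrt 5) / 2)) -
          ((1 - Real.sqrt 5) / 2) * Real.exp ((Real.exp t - 1) * ((1 - Real.sqrt 5) / 2)))) := by
  have habs : Summable fun k => |(Nat.fib (k + 1) : ℝ)| * (exp |t| - 1) ^ k / k ! := by
    simpa only [Nat.abs_cast] using (hasSum_fib_succ_mul_pow_div_factorial (exp |t| - 1)).summable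
  rw [one_div_mul_eq_div]
  simpa only [fibonacciFubini, stirling2_eq_stirlingSecond_s2, Nat.cast_sum, Nat.cast_mul] using
    hasSum_sum_mul_stirlingSecond_mul_pow_div_factorial _ habs
      (hasSum_fib_succ_mul_pow_div_factorial (exp t - 1))
end

section
/- For every integer k ≥ 1 and every integer n ≥ k+1, the k-th left-down diagonal of the Fibonacci-Fubini triangle satisfies the k-th order homogeneous linear recurrence 0 = Σ_{j=0}^{k} s(k+1, k−j+1) · T(n−j, k), where T(n,k) = F_{k+1} · S(n,k) and s(m,i) are the signed Stirling numbers of the first kind. -/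
/-- Signed Stirling numbers of the first kind, defined by
`s(n,k) = s(n-1,k-1) - (n-1)·s(n-1,k)` with `s(0,0) = 1`. -/
def stirling1 : ℕ → ℕ → ℤ
  | 0, 0 => 1
  | 0, _ + 1 => 0
  | n + 1, 0 => -(n : ℤ) * stirling1 n 0
  | n + 1, k + 1 => stirling1 n k - (n : ℤ) * stirling1 n (k + 1)

/-- Entries of the Fibonacci-Fubini triangle. -/
def fibFubiniT (n k : ℕ) : ℕ := Nat.fib (k + 1) * stirling2 n k

/-!
Write `E` for the shift `a ↦ a (· + 1)` on integer sequences. The numbers `s(k+1, i)` are the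
coefficients of `x (x - 1) ⋯ (x - k)`, so the sum in question is `E (E - 1) ⋯ (E - k)` applied to
the column `S(·, k)` (times `F_{k+1}`). The recurrence of `S` says exactly `(E - k) S(·, k) =
S(·, k - 1)`, so peeling off one factor at a time reduces the claim to `E S(·, 0) = 0`.
-/

open Finset

theorem stirling1_succ_zero : ∀ n, stirling1 (n + 1) 0 = 0
  | 0 => by simp [stirling1]
  | n + 1 => by rw [stirling1, stirling1_succ_zero n, mul_zero]

theorem stirling1_eq_zero_of_lt : ∀ {n k : ℕ}, n < k → stirling1 n k = 0
  | 0, _ + 1, _ => by simp [stirling1]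
  | n + 1, k + 1, h => by
    rw [stirling1, stirling1_eq_zero_of_lt (by omega : n < k),
      stirling1_eq_zero_of_lt (by omega : n < k + 1), mul_zero, sub_zero]

theorem stirling2_succ_zero (n : ℕ) : stirling2 (n + 1) 0 = 0 := rfl

/-- The falling factorial `E (E - 1) ⋯ (E - m + 1)` of the shift operator `E`, applied to `a`
and evaluated at `d`. -/
def fallingShift (m : ℕ) (a : ℕ → ℤ) (d : ℕ) : ℤ :=
  ∑ i ∈ range (m + 1), stirling1 m i * a (i + d)

theorem fallingShift_succ (m : ℕ) (a : ℕ → ℤ) (d : ℕ) :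
    fallingShift (m + 1) a d = fallingShift m a (d + 1) - m * fallingShift m a d := by
  have hshift : fallingShift m a (d + 1) = ∑ i ∈ range (m + 1), stirling1 m i * a (i + 1 + d) :=
    sum_congr rfl fun i _ => by rw [add_right_comm, add_assoc]
  have hscale : fallingShift m a d =
      ∑ i ∈ range (m + 1), stirling1 m (i + 1) * a (i + 1 + d) + stirling1 m 0 * a (0 + d) := by
    rw [← sum_range_succ' (fun i => stirling1 m i * a (i + d)), sum_range_succ,
      stirling1_eq_zero_of_lt (Nat.lt_succ_self m), zero_mul, add_zero, fallingShift]
  rw [fallingShift, sum_range_succ', hshift, hscale]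
  simp only [stirling1, sub_mul, sum_sub_distrib, mul_add, mul_sum, mul_assoc]
  ring

theorem fallingShift_shift_sub_mul (m : ℕ) (a : ℕ → ℤ) (c : ℤ) (d : ℕ) :
    fallingShift m (fun n => a (n + 1) - c * a n) d =
      fallingShift m a (d + 1) - c * fallingShift m a d := by
  simp only [fallingShift, mul_sum, ← sum_sub_distrib]
  exact sum_congr rfl fun i _ => by rw [← add_assoc]; ring

theorem stirling2_succ_succ_sub (n k : ℕ) :
    (stirling2 (n + 1) (k + 1) : ℤ) - (k + 1 : ℕ) * stirling2 n (k + 1) = stirling2 n k := by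
  rw [stirling2]
  push_cast
  ring

theorem fallingShift_stirling2 (k d : ℕ) :
    fallingShift (k + 1) (fun n => (stirling2 n k : ℤ)) d = 0 := by
  induction k generalizing d with
  | zero => simp [fallingShift, sum_range_succ, stirling1, add_comm 1 d, stirling2_succ_zero]
  | succ k ih =>
    rw [fallingShift_succ, ← fallingShift_shift_sub_mul]
    simp only [stirling2_succ_succ_sub]
    exact ih d

theorem fibFubiniT_diagonal_recurrence_general (k : ℕ) (n : ℕ) (hn : k + 1 ≤ n) :
    0 = ∑ j ∈ range (k + 1), stirling1 (k + 1) (k - j + 1) * (fibFubiniT (n - j) k : ℤ) := by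
  obtain ⟨d, rfl⟩ : ∃ d, n = d + (k + 1) := ⟨n - (k + 1), by omega⟩
  have hreflect : fallingShift (k + 1) (fun n => (stirling2 n k : ℤ)) d =
      ∑ j ∈ range (k + 1),
        stirling1 (k + 1) (k - j + 1) * (stirling2 (d + (k + 1) - j) k : ℤ) := by
    rw [fallingShift, sum_range_succ', stirling1_succ_zero, zero_mul, add_zero,
      ← sum_range_reflect]
    refine sum_congr rfl fun j hj => ?_
    have hjk : j ≤ k := Nat.lt_succ_iff.mp (mem_range.mp hj)
    rw [show k + 1 - 1 - j + 1 = k - j + 1 by omega, show k - j + 1 + d = d + (k + 1) - j by omega]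
  simp only [fibFubiniT, Nat.cast_mul, mul_left_comm _ (Nat.fib (k + 1) : ℤ), ← mul_sum,
    ← hreflect, fallingShift_stirling2, mul_zero]

open Finset in
/-- The left-down diagonals of the Fibonacci-Fubini triangle satisfy a `k`-th order
homogeneous linear recurrence with Stirling numbers of the first kind as coefficients. -/
theorem fibFubiniT_diagonal_recurrence (k : ℕ) (hk : 1 ≤ k) (n : ℕ) (hn : k + 1 ≤ n) :
    0 = ∑ j ∈ range (k + 1), stirling1 (k + 1) (k - j + 1) * (fibFubiniT (n - j) k : ℤ) :=
  fibFubiniT_diagonal_recurrence_general k n hn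
end

section
/- For every integer r ≥ 2 and every integer n ≥ r+1, the right-down diagonal sequence d_n^{(r)} = F_{n−r+2} · S(n, n−r+1) of the Fibonacci-Fubini triangle satisfies F_{n−r+1} · d_n^{(r)} = F_{n−r+2} · d_{n−1}^{(r)} + (n−r+1) · F_{n−r+1} · d_{n−1}^{(r−1)}. -/
/-- The `r`-th right-down diagonal of the Fibonacci-Fubini triangle:
`d_n^{(r)} = T(n, n-r+1) = F_{n-r+2} · S(n, n-r+1)`. -/
def fibFubiniD (r n : ℕ) : ℕ := Nat.fib (n - r + 2) * stirling2 n (n - r + 1)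

/-
After clearing the Fibonacci factors, the recurrence is the Stirling recurrence
`S(n, m+1) = S(n-1, m) + (m+1) S(n-1, m+1)` in column `m + 1 = n - r + 1`, multiplied by
`F_{m+1} F_{m+2}`.
-/

theorem stirling2_succ_succ (n k : ℕ) :
    stirling2 (n + 1) (k + 1) = stirling2 n k + (k + 1) * stirling2 n (k + 1) :=
  rfl

theorem fibFubiniD_eq_of_add_eq {r n m : ℕ} (hm : 0 < m) (h : m + r = n + 1) :
    fibFubiniD r n = Nat.fib (m + 1) * stirling2 n m := by
  obtain ⟨m, rfl⟩ := Nat.exists_eq_add_one_of_ne_zero hm.ne'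
  rw [fibFubiniD, show n - r = m by omega]

/-- Recurrence relating consecutive right-down diagonals of the Fibonacci-Fubini triangle. -/
theorem fibFubiniD_recurrence (r : ℕ) (hr : 2 ≤ r) (n : ℕ) (hn : r + 1 ≤ n) :
    Nat.fib (n - r + 1) * fibFubiniD r n =
      Nat.fib (n - r + 2) * fibFubiniD r (n - 1) +
        (n - r + 1) * Nat.fib (n - r + 1) * fibFubiniD (r - 1) (n - 1) := by
  obtain ⟨m, hm⟩ : ∃ m, n - r = m + 1 := ⟨n - r - 1, by omega⟩
  obtain ⟨k, rfl⟩ : ∃ k, n = k + 1 := ⟨n - 1, by omega⟩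
  rw [hm, Nat.add_sub_cancel,
    fibFubiniD_eq_of_add_eq (m := m + 2) (by omega) (by omega),
    fibFubiniD_eq_of_add_eq (m := m + 1) (by omega) (by omega),
    fibFubiniD_eq_of_add_eq (m := m + 2) (by omega) (by omega),
    stirling2_succ_succ]
  ring
end
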